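/- Input independence of a single additive sharing: for any two secrets s, s' ∈ Z_m and any fixed index j, the marginal distribution of all shares except the j-th, under additive sharing of s, equals the corresponding marginal under additive sharing of s'. -/
import Mathlib


open PMF

/-- The additive share vector for `n+1` parties. -/
noncomputable def shareVec (m n : ℕ) (s : ZMod m) (a : Fin n → ZMod m) :
    Fin (n + 1) → ZMod m :=
  Fin.snoc a (s - ∑ i, a i)

lemma uniform_map_equiv {α : Type*} [Fintype α] [Nonempty α] (e : α ≃ α) :
    (PMF.uniformOfFintype α).map e = PMF.uniformOfFintype α := by
  classical
  ext b
  rw [PMF.map_apply]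
  rw [show (∑' a, if b = e a then (PMF.uniformOfFintype α) a else 0)
      = ∑' a, if a = e.symm b then (PMF.uniformOfFintype α) a else 0 by
    congr 1; funext a; congr 1
    simp [eq_comm, Equiv.eq_symm_apply]]
  rw [tsum_eq_single (e.symm b) (by intro a ha; simp [ha])]
  simp

/-- Input independence of a single additive sharing: the marginal distribution of
all shares except the `j`-th is the same for any two secrets `s, s'`. -/
theorem additive_sharing_marginal_input_independent (m n : ℕ) [NeZero m]
    (hm : 2 ≤ m) (s s' : ZMod m) (j : Fin (n + 1)) :
    (PMF.uniformOfFintype (Fin n → ZMod m)).map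
        (fun a => (shareVec m n s a) ∘ j.succAbove)
      = (PMF.uniformOfFintype (Fin n → ZMod m)).map
        (fun a => (shareVec m n s' a) ∘ j.succAbove) := by
  induction j using Fin.lastCases with
  | last =>
    have : ∀ t : ZMod m, (fun a : Fin n → ZMod m => (shareVec m n t a) ∘ (Fin.last n).succAbove)
        = fun a => a := by
      intro t
      funext a k
      simp [shareVec, Fin.succAbove_last, Fin.snoc_castSucc]
    rw [this s, this s']
  | cast i =>
    set δ := s' - s with hδ
    -- translation equivalence on coordinate i
    have hli : ∀ a : Fin n → ZMod m, ∀ v : ZMod m,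
        Function.update (Function.update a i (a i + v)) i
          ((Function.update a i (a i + v)) i - v) = a := by
      intro a v
      funext k
      by_cases hk : k = i
      · subst hk; simp
      · simp [Function.update, hk]
    let e : (Fin n → ZMod m) ≃ (Fin n → ZMod m) :=
      { toFun := fun a => Function.update a i (a i + δ)
        invFun := fun a => Function.update a i (a i - δ)
        left_inv := fun a => hli a δ
        right_inv := fun a => by
          have := hli (Function.update a i (a i - δ)) δ
          funext k
          by_cases hk : k = i
          · subst hk; simp
          · simp [Function.update, hk] }
    have key : (fun a : Fin n → ZMod m => (shareVec m n s' (e a)) ∘ (Fin.castSucc i).succAbove)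
        = fun a => (shareVec m n s a) ∘ (Fin.castSucc i).succAbove := by
      funext a k
      have hne : (Fin.castSucc i).succAbove k ≠ Fin.castSucc i := Fin.succAbove_ne _ _
      have hsum : ∑ x, (e a) x = (∑ x, a x) + δ := by
        show ∑ x, Function.update a i (a i + δ) x = _
        rw [Finset.sum_update_of_mem (Finset.mem_univ i)]
        rw [← Finset.add_sum_erase _ a (Finset.mem_univ i)]
        rw [show Finset.univ \ {i} = Finset.univ.erase i by
          ext x; simp [Finset.mem_erase, and_comm]]
        ring
      have hall : ∀ l : Fin (n + 1), l ≠ Fin.castSucc i →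
          shareVec m n s' (e a) l = shareVec m n s a l := by
        intro l hl
        induction l using Fin.lastCases with
        | last =>
          simp only [shareVec, Fin.snoc_last, hsum, hδ]
          ring
        | cast k' =>
          have hk' : k' ≠ i := fun h => hl (by rw [h])
          simp only [shareVec, Fin.snoc_castSucc]
          show Function.update a i (a i + δ) k' = a k'
          simp [Function.update, hk']
      exact hall _ hne
    calc (PMF.uniformOfFintype (Fin n → ZMod m)).map
          (fun a => (shareVec m n s a) ∘ (Fin.castSucc i).succAbove)
        = ((PMF.uniformOfFintype (Fin n → ZMod m)).map e).map
          (fun a => (shareVec m n s' a) ∘ (Fin.castSucc i).succAbove) := by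
          rw [PMF.map_comp]
          rw [show ((fun a => (shareVec m n s' a) ∘ (Fin.castSucc i).succAbove) ∘ e)
            = fun a : Fin n → ZMod m => (shareVec m n s' (e a)) ∘ (Fin.castSucc i).succAbove
            from rfl]
          rw [key]
      _ = _ := by rw [uniform_map_equiv]
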